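/- arXiv:1410.6960 — 9 statements merged into one kernel-verified Lean document; each statement's English description precedes it below -/
import Mathlib

section
/- Let c be an S-closure operator on L^Y and let 𝒮_c = {A ∈ L^Y : A = c(A)} be its set of fixed points. Then 𝒮_c is an S-closure system in ⟨L^Y, ⊆⟩; in particular, for every ⟨f, g⟩ ∈ S and every fixed point A of c one has c(g(A)) = g(A). -/
/-- A complete residuated lattice: a complete lattice with a commutative, associative
multiplication whose neutral element is the top element and which distributes over
arbitrary suprema. -/
class CompleteResiduatedLattice (L : Type*) extends CompleteLattice L, CommMonoid L where
  mul_sSup : ∀ (a : L) (s : Set L), a * sSup s = ⨆ b ∈ s, a * b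
  one_eq_top : (1 : L) = ⊤

namespace FAIparam

variable {L : Type*} {Y : Type*} {X : Type*}

/-- A fuzzy attribute implication (FAI): a pair (antecedent, consequent) of L-sets in Y. -/
abbrev FAI (L Y : Type*) := (Y → L) × (Y → L)

/-- A pair of operators on L-sets in Y. -/
abbrev OpPair (L Y : Type*) := ((Y → L) → (Y → L)) × ((Y → L) → (Y → L))

/-- S is a parameterization: every pair in S is a monotone Galois connection, the identity
pair belongs to S, and S is closed under composition ⟨f₁,g₁⟩∘⟨f₂,g₂⟩ = ⟨f₁∘f₂, g₂∘g₁⟩. -/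
def IsParam [CompleteResiduatedLattice L] (S : Set (OpPair L Y)) : Prop :=
  (∀ p ∈ S, ∀ A B : Y → L, p.1 A ≤ B ↔ A ≤ p.2 B) ∧
  (((id, id) : OpPair L Y) ∈ S) ∧
  (∀ p ∈ S, ∀ q ∈ S, ((p.1 ∘ q.1, q.2 ∘ p.2) : OpPair L Y) ∈ S)

/-- M ⊨^S A ⇒ B : for every ⟨f,g⟩ ∈ S, f(A) ⊆ M implies f(B) ⊆ M. -/
def Sat [CompleteResiduatedLattice L] (S : Set (OpPair L Y)) (M : Y → L) (φ : FAI L Y) : Prop :=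
  ∀ p ∈ S, p.1 φ.1 ≤ M → p.1 φ.2 ≤ M

/-- The set Mod^S(Th) of S-models of a theory Th. -/
def ModS [CompleteResiduatedLattice L] (S : Set (OpPair L Y)) (Th : Set (FAI L Y)) :
    Set (Y → L) :=
  {M | ∀ φ ∈ Th, Sat S M φ}

/-- Semantic entailment Th ⊨^S φ, i.e. Mod^S(Th) ⊆ Mod^S({φ}). -/
def Entails [CompleteResiduatedLattice L] (S : Set (OpPair L Y)) (Th : Set (FAI L Y))
    (φ : FAI L Y) : Prop :=
  ModS S Th ⊆ ModS S {φ}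

/-- [A]^S_Th : the least S-model of Th containing A (intersection of all such models). -/
def clS [CompleteResiduatedLattice L] (S : Set (OpPair L Y)) (Th : Set (FAI L Y))
    (A : Y → L) : Y → L :=
  sInf {M | M ∈ ModS S Th ∧ A ≤ M}

/-- S-closure operator on L^Y. -/
def IsSClosureOp [CompleteResiduatedLattice L] (S : Set (OpPair L Y))
    (c : (Y → L) → (Y → L)) : Prop :=
  (∀ A, A ≤ c A) ∧ (∀ A B, A ≤ B → c A ≤ c B) ∧
  (∀ p ∈ S, ∀ A, c (p.2 (c A)) ≤ p.2 (c A))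

/-- S-closure system in ⟨L^Y, ⊆⟩. -/
def IsSClosureSys [CompleteResiduatedLattice L] (S : Set (OpPair L Y))
    (𝒮 : Set (Y → L)) : Prop :=
  (∀ T ⊆ 𝒮, sInf T ∈ 𝒮) ∧ (∀ p ∈ S, ∀ M ∈ 𝒮, p.2 M ∈ 𝒮)

/-- c_𝒮(A) = ⋂{B ∈ 𝒮 : A ⊆ B}. -/
def clSys [CompleteResiduatedLattice L] (𝒮 : Set (Y → L)) (A : Y → L) : Y → L :=
  sInf {B | B ∈ 𝒮 ∧ A ≤ B}

/-- I ⊨^S A ⇒ B for an L-context ⟨X,Y,I⟩ (with I curried, I x = I_x). -/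
def CtxSat [CompleteResiduatedLattice L] (S : Set (OpPair L Y)) (I : X → Y → L)
    (φ : FAI L Y) : Prop :=
  ∀ x, Sat S (I x) φ

/-- S_g : the set of upper adjoints occurring in S. -/
def Sg [CompleteResiduatedLattice L] (S : Set (OpPair L Y)) : Set ((Y → L) → (Y → L)) :=
  {g | ∃ f, (f, g) ∈ S}

/-- F^↑ = ⋂{g(I_x) : ⟨x,g⟩ ∈ F}. -/
def upOp [CompleteResiduatedLattice L] (I : X → Y → L)
    (F : Set (X × ((Y → L) → (Y → L)))) : Y → L :=
  ⨅ xg ∈ F, xg.2 (I xg.1)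

/-- G^↓ = {⟨x,g⟩ ∈ X × S_g : G ⊆ g(I_x)}. -/
def downOp [CompleteResiduatedLattice L] (S : Set (OpPair L Y)) (I : X → Y → L)
    (G : Y → L) : Set (X × ((Y → L) → (Y → L))) :=
  {xg | xg.2 ∈ Sg S ∧ G ≤ xg.2 (I xg.1)}

/-- G^{↓↑} = ⋂{g(I_x) : x ∈ X, ⟨f,g⟩ ∈ S, G ⊆ g(I_x)}. -/
def dnup [CompleteResiduatedLattice L] (S : Set (OpPair L Y)) (I : X → Y → L)
    (G : Y → L) : Y → L :=
  upOp I (downOp S I G)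

/-- Σ is S-complete in ⟨X,Y,I⟩. -/
def SComplete [CompleteResiduatedLattice L] (S : Set (OpPair L Y)) (Th : Set (FAI L Y))
    (I : X → Y → L) : Prop :=
  ∀ A B : Y → L, Entails S Th (A, B) ↔ CtxSat S I (A, B)

/-- Σ is an S-base of ⟨X,Y,I⟩. -/
def SBase [CompleteResiduatedLattice L] (S : Set (OpPair L Y)) (Th : Set (FAI L Y))
    (I : X → Y → L) : Prop :=
  SComplete S Th I ∧ ∀ Th' ⊂ Th, ¬ SComplete S Th' I

/-- S-provability: axioms A∪B ⇒ A, assumptions from Th, rule (Cut) and rule (F). -/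
inductive ProvS [CompleteResiduatedLattice L] (S : Set (OpPair L Y)) (Th : Set (FAI L Y)) :
    FAI L Y → Prop
  | ax (A B : Y → L) : ProvS S Th (A ⊔ B, A)
  | hyp {φ : FAI L Y} (h : φ ∈ Th) : ProvS S Th φ
  | cut {A B C D : Y → L} : ProvS S Th (A, B) → ProvS S Th (B ⊔ C, D) → ProvS S Th (A ⊔ C, D)
  | mul {A B : Y → L} {p : OpPair L Y} (hp : p ∈ S) : ProvS S Th (A, B) → ProvS S Th (p.1 A, p.1 B)

/-- Provability using the axioms and (Cut) as the only inference rule. -/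
inductive ProvCut [CompleteResiduatedLattice L] (Th : Set (FAI L Y)) : FAI L Y → Prop
  | ax (A B : Y → L) : ProvCut Th (A ⊔ B, A)
  | hyp {φ : FAI L Y} (h : φ ∈ Th) : ProvCut Th φ
  | cut {A B C D : Y → L} : ProvCut Th (A, B) → ProvCut Th (B ⊔ C, D) → ProvCut Th (A ⊔ C, D)

/-- Residuum a → b = ⋁{c : a ⊗ c ≤ b}. -/
def resid [CompleteResiduatedLattice L] (a b : L) : L := sSup {c | a * c ≤ b}

/-- Subsethood degree S(A,B) = ⋀_{y∈Y} (A(y) → B(y)). -/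
def subDeg [CompleteResiduatedLattice L] (A B : Y → L) : L := ⨅ y, resid (A y) (B y)

/-- c ⊗ B, pointwise. -/
def scMul [CompleteResiduatedLattice L] (c : L) (B : Y → L) : Y → L := fun y => c * B y

/-- ||A ⇒ B||^S_M = ⋁{c ∈ L : M ⊨^S A ⇒ c ⊗ B}. -/
def truthDeg [CompleteResiduatedLattice L] (S : Set (OpPair L Y)) (M A B : Y → L) : L :=
  sSup {c | Sat S M (A, scMul c B)}

/-- ||A ⇒ B||^S_Th = ⋀_{M ∈ Mod^S(Th)} ||A ⇒ B||^S_M. -/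
def entDeg [CompleteResiduatedLattice L] (S : Set (OpPair L Y)) (Th : Set (FAI L Y))
    (A B : Y → L) : L :=
  ⨅ M ∈ ModS S Th, truthDeg S M A B

/-- Immediate consequence operator t^S_Th. -/
def tOp [CompleteResiduatedLattice L] (S : Set (OpPair L Y)) (Th : Set (FAI L Y))
    (M : Y → L) : Y → L :=
  M ⊔ sSup {N | ∃ φ ∈ Th, ∃ p ∈ S, p.1 φ.1 ≤ M ∧ N = p.1 φ.2}

/-- S-pseudo-intents, defined by well-founded recursion on ⊊ (L^Y is finite). -/
noncomputable def IsPseudoIntent [CompleteResiduatedLattice L] [Finite L] [Finite Y]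
    (dn : (Y → L) → (Y → L)) : (Y → L) → Prop :=
  (wellFounded_lt (α := Y → L)).fix
    (fun P rec => P < dn P ∧ ∀ Q, ∀ h : Q < P, rec Q h → dn Q ≤ P)

section

variable {α : Type*} [CompleteLattice α] {c : α → α}

theorem sInf_eq_apply_sInf (hinfl : ∀ a, a ≤ c a) (hmono : Monotone c) {T : Set α}
    (hT : ∀ a ∈ T, a = c a) : sInf T = c (sInf T) :=
  le_antisymm (hinfl _) <| le_sInf fun a ha => (hmono (sInf_le ha)).trans (hT a ha).ge

end

theorem IsSClosureOp.monotone [CompleteResiduatedLattice L] {S : Set (OpPair L Y)}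
    {c : (Y → L) → (Y → L)} (hc : IsSClosureOp S c) : Monotone c :=
  fun A B h => hc.2.1 A B h

theorem IsSClosureOp.apply_snd_eq [CompleteResiduatedLattice L] {S : Set (OpPair L Y)}
    {c : (Y → L) → (Y → L)} (hc : IsSClosureOp S c) {p : OpPair L Y} (hp : p ∈ S)
    {A : Y → L} (hA : A = c A) : c (p.2 A) = p.2 A := by
  refine le_antisymm ?_ (hc.1 _)
  calc c (p.2 A) = c (p.2 (c A)) := by rw [← hA]
    _ ≤ p.2 (c A) := hc.2.2 p hp A
    _ = p.2 A := by rw [← hA]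

theorem fixedPoints_isSClosureSys_general
    {L Y : Type*} [CompleteResiduatedLattice L]
    (S : Set (OpPair L Y))
    (c : (Y → L) → (Y → L)) (hc : IsSClosureOp S c) :
    IsSClosureSys S {A : Y → L | A = c A} ∧
      ∀ p ∈ S, ∀ A : Y → L, A = c A → c (p.2 A) = p.2 A :=
  ⟨⟨fun _ hT => sInf_eq_apply_sInf hc.1 hc.monotone hT,
      fun _ hp _ hM => (hc.apply_snd_eq hp hM).symm⟩,
    fun _ hp _ hA => hc.apply_snd_eq hp hA⟩

/-- the fixed points of an S-closure operator form an S-closure system;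
in particular every upper adjoint image of a fixed point is again a fixed point. -/
theorem fixedPoints_isSClosureSys
    {L Y : Type*} [CompleteResiduatedLattice L] [Nonempty Y]
    (S : Set (OpPair L Y)) (hS : IsParam S)
    (c : (Y → L) → (Y → L)) (hc : IsSClosureOp S c) :
    IsSClosureSys S {A : Y → L | A = c A} ∧
      ∀ p ∈ S, ∀ A : Y → L, A = c A → c (p.2 A) = p.2 A :=
  fixedPoints_isSClosureSys_general S c hc

end FAIparam
end

section
/- Let 𝒮 be an S-closure system in ⟨L^Y, ⊆⟩ and define c_𝒮 : L^Y → L^Y by c_𝒮(A) = ⋂{B ∈ 𝒮 : A ⊆ B}. Then c_𝒮 is an S-closure operator on L^Y. -/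
namespace FAIparam

variable {L : Type*} {Y : Type*} {X : Type*}

section ClosureSystem

variable [CompleteResiduatedLattice L] {𝒮 : Set (Y → L)} {A B : Y → L}

theorem le_clSys : A ≤ clSys 𝒮 A :=
  le_sInf fun _ hB => hB.2

theorem clSys_mono (hAB : A ≤ B) : clSys 𝒮 A ≤ clSys 𝒮 B :=
  sInf_le_sInf fun _ hM => ⟨hM.1, hAB.trans hM.2⟩

theorem clSys_le_of_mem (hB : B ∈ 𝒮) (hAB : A ≤ B) : clSys 𝒮 A ≤ B :=
  sInf_le ⟨hB, hAB⟩

theorem clSys_mem (h𝒮 : ∀ T ⊆ 𝒮, sInf T ∈ 𝒮) (A : Y → L) : clSys 𝒮 A ∈ 𝒮 :=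
  h𝒮 _ fun _ hB => hB.1

end ClosureSystem

theorem clSys_isSClosureOp_general
    {L Y : Type*} [CompleteResiduatedLattice L]
    (S : Set (OpPair L Y))
    (𝒮 : Set (Y → L)) (h𝒮 : IsSClosureSys S 𝒮) :
    IsSClosureOp S (clSys 𝒮) :=
  ⟨fun _ => le_clSys, fun _ _ => clSys_mono,
    fun p hp A => clSys_le_of_mem (h𝒮.2 p hp _ (clSys_mem h𝒮.1 A)) le_rfl⟩

/-- the operator c_𝒮 induced by an S-closure system 𝒮 is an
S-closure operator. -/
theorem clSys_isSClosureOp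
    {L Y : Type*} [CompleteResiduatedLattice L] [Nonempty Y]
    (S : Set (OpPair L Y)) (hS : IsParam S)
    (𝒮 : Set (Y → L)) (h𝒮 : IsSClosureSys S 𝒮) :
    IsSClosureOp S (clSys 𝒮) :=
  clSys_isSClosureOp_general S 𝒮 h𝒮

end FAIparam
end

section
/- The maps c ↦ 𝒮_c = {A ∈ L^Y : A = c(A)} and 𝒮 ↦ c_𝒮 (with c_𝒮(A) = ⋂{B ∈ 𝒮 : A ⊆ B}) are mutually inverse between S-closure operators and S-closure systems: for every S-closure operator c one has c = c_{𝒮_c}, and for every S-closure system 𝒮 one has 𝒮 = 𝒮_{c_𝒮}. -/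
namespace FAIparam

variable {L : Type*} {Y : Type*} {X : Type*}

section CompleteLattice

variable {α : Type*} [CompleteLattice α]

theorem _root_.ClosureOperator.apply_eq_sInf_fixed (c : ClosureOperator α) (x : α) :
    c x = sInf {y | y = c y ∧ x ≤ y} := by
  have hfixed : {y | y = c y ∧ x ≤ y} = {y | x ≤ y ∧ c.IsClosed y} := by
    ext y
    exact and_comm.trans (and_congr_right' (eq_comm.trans c.isClosed_iff.symm))
  rw [hfixed, isGLB_iff_sInf_eq.mp (c.closure_isGLB x)]

theorem mem_iff_eq_sInf_of_sInf_mem {𝒮 : Set α} (h𝒮 : ∀ T ⊆ 𝒮, sInf T ∈ 𝒮) (x : α) :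
    x ∈ 𝒮 ↔ x = sInf {y | y ∈ 𝒮 ∧ x ≤ y} := by
  constructor
  · intro hx
    exact le_antisymm (le_sInf fun y hy => hy.2) (sInf_le ⟨hx, le_rfl⟩)
  · intro hx
    rw [hx]
    exact h𝒮 _ fun y hy => hy.1

end CompleteLattice

section SClosureOp

variable {L Y : Type*} [CompleteResiduatedLattice L] {S : Set (OpPair L Y)}
  {c : (Y → L) → (Y → L)}

theorem IsSClosureOp.idempotent (hid : ((id, id) : OpPair L Y) ∈ S) (hc : IsSClosureOp S c)
    (A : Y → L) : c (c A) = c A :=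
  le_antisymm (hc.2.2 _ hid A) (hc.1 _)

def IsSClosureOp.toClosureOperator (hid : ((id, id) : OpPair L Y) ∈ S)
    (hc : IsSClosureOp S c) : ClosureOperator (Y → L) :=
  ClosureOperator.mk' c (fun A B => hc.2.1 A B) hc.1 fun A => (hc.idempotent hid A).le

end SClosureOp

theorem sClosureOp_sClosureSys_mutually_inverse_general
    {L Y : Type*} [CompleteResiduatedLattice L]
    (S : Set (OpPair L Y)) (hS : IsParam S) :
    (∀ c : (Y → L) → (Y → L), IsSClosureOp S c → c = clSys {A : Y → L | A = c A}) ∧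
    (∀ 𝒮 : Set (Y → L), IsSClosureSys S 𝒮 → 𝒮 = {A : Y → L | A = clSys 𝒮 A}) := by
  refine ⟨fun c hc => funext fun A => ?_, fun 𝒮 h𝒮 => Set.ext fun A => ?_⟩
  · exact (hc.toClosureOperator hS.2.1).apply_eq_sInf_fixed A
  · exact mem_iff_eq_sInf_of_sInf_mem h𝒮.1 A

/-- the maps c ↦ 𝒮_c and 𝒮 ↦ c_𝒮 are mutually inverse between
S-closure operators and S-closure systems. -/
theorem sClosureOp_sClosureSys_mutually_inverse
    {L Y : Type*} [CompleteResiduatedLattice L] [Nonempty Y]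
    (S : Set (OpPair L Y)) (hS : IsParam S) :
    (∀ c : (Y → L) → (Y → L), IsSClosureOp S c → c = clSys {A : Y → L | A = c A}) ∧
    (∀ 𝒮 : Set (Y → L), IsSClosureSys S 𝒮 → 𝒮 = {A : Y → L | A = clSys 𝒮 A}) :=
  sClosureOp_sClosureSys_mutually_inverse_general S hS

end FAIparam
end

section
/- For every set Σ of fuzzy attribute implications in Y, the set Mod^S(Σ) of S-models of Σ is an S-closure system: it is closed under arbitrary pointwise intersections, and M ∈ Mod^S(Σ) implies g(M) ∈ Mod^S(Σ) for every ⟨f, g⟩ ∈ S. -/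
namespace FAIparam

variable {L : Type*} {Y : Type*} {X : Type*}

section Models

variable [CompleteResiduatedLattice L] {S : Set (OpPair L Y)} {φ : FAI L Y}

theorem sat_sInf {T : Set (Y → L)} (hT : ∀ M ∈ T, Sat S M φ) : Sat S (sInf T) φ :=
  fun p hp hA => le_sInf fun M hM => hT M hM p hp (hA.trans (sInf_le hM))

/-- For `p = ⟨f, g⟩` and `q = ⟨f', g'⟩`, adjunction turns `f' A ⊆ g M` into `(f ∘ f') A ⊆ M`,
and `⟨f ∘ f', g' ∘ g⟩` is again in `S`. -/
theorem sat_snd {p : OpPair L Y} (hgc : GaloisConnection p.1 p.2)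
    (hcomp : ∀ q ∈ S, ((p.1 ∘ q.1, q.2 ∘ p.2) : OpPair L Y) ∈ S) {M : Y → L}
    (hM : Sat S M φ) : Sat S (p.2 M) φ := by
  intro q hq hA
  rw [← hgc] at hA ⊢
  exact hM _ (hcomp q hq) hA

theorem sInf_mem_modS {Th : Set (FAI L Y)} {T : Set (Y → L)} (hT : T ⊆ ModS S Th) :
    sInf T ∈ ModS S Th :=
  fun φ hφ => sat_sInf fun _ hM => hT hM φ hφ

theorem IsParam.snd_mem_modS (hS : IsParam S) {Th : Set (FAI L Y)} {p : OpPair L Y}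
    (hp : p ∈ S) {M : Y → L} (hM : M ∈ ModS S Th) : p.2 M ∈ ModS S Th :=
  fun φ hφ => sat_snd (hS.1 p hp) (hS.2.2 p hp) (hM φ hφ)

end Models

theorem modS_isSClosureSys_general
    {L Y : Type*} [CompleteResiduatedLattice L]
    (S : Set (OpPair L Y)) (hS : IsParam S)
    (Th : Set (FAI L Y)) :
    (∀ T ⊆ ModS S Th, sInf T ∈ ModS S Th) ∧
      (∀ p ∈ S, ∀ M ∈ ModS S Th, p.2 M ∈ ModS S Th) :=
  ⟨fun _ => sInf_mem_modS, fun _ hp _ => hS.snd_mem_modS hp⟩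

/-- Mod^S(Σ) is an S-closure system: closed under arbitrary pointwise
intersections and under all upper adjoints of S. -/
theorem modS_isSClosureSys
    {L Y : Type*} [CompleteResiduatedLattice L] [Nonempty Y]
    (S : Set (OpPair L Y)) (hS : IsParam S)
    (Th : Set (FAI L Y)) :
    (∀ T ⊆ ModS S Th, sInf T ∈ ModS S Th) ∧
      (∀ p ∈ S, ∀ M ∈ ModS S Th, p.2 M ∈ ModS S Th) :=
  modS_isSClosureSys_general S hS Th

end FAIparam
end

section
/- For every L-context ⟨X, Y, I⟩ and every FAI A ⇒ B, the following are equivalent: (1) I ⊨^S A ⇒ B; (2) M^{↓↑} ⊨^S A ⇒ B for all M ∈ L^Y; (3) A^{↓↑} ⊨^S A ⇒ B; (4) B ⊆ A^{↓↑}; (5) A^↓ ⊆ B^↓. -/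
namespace FAIparam

variable {L : Type*} {Y : Type*} {X : Type*}

section Lemmas

variable [CompleteResiduatedLattice L] {S : Set (OpPair L Y)} {I : X → Y → L}
  {A B G : Y → L} {φ : FAI L Y}

theorem IsParam.gc (hS : IsParam S) {p : OpPair L Y} (hp : p ∈ S) : GaloisConnection p.1 p.2 :=
  hS.1 p hp

theorem sat_iInf {ι : Sort*} {M : ι → Y → L} (hM : ∀ i, Sat S (M i) φ) :
    Sat S (⨅ i, M i) φ := fun p hp hA =>
  le_iInf fun i => hM i p hp (hA.trans (iInf_le M i))

theorem Sat.upperAdjoint (hS : IsParam S) {p : OpPair L Y} (hp : p ∈ S) {M : Y → L}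
    (hM : Sat S M φ) : Sat S (p.2 M) φ := by
  intro q hq hA
  have hcomp : ((p.1 ∘ q.1, q.2 ∘ p.2) : OpPair L Y) ∈ S := hS.2.2 p hp q hq
  exact (hS.gc hp).le_iff_le.mp (hM _ hcomp ((hS.gc hp).le_iff_le.mpr hA))

theorem le_of_sat (hS : IsParam S) {M : Y → L} (h : Sat S M (A, B)) (hA : A ≤ M) : B ≤ M :=
  h (id, id) hS.2.1 hA

theorem le_dnup : G ≤ dnup S I G :=
  le_iInf₂ fun _ hxg => hxg.2

theorem dnup_le_of_mem_downOp {xg : X × ((Y → L) → (Y → L))} (hxg : xg ∈ downOp S I G) :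
    dnup S I G ≤ xg.2 (I xg.1) :=
  iInf₂_le xg hxg

theorem sat_dnup_of_ctxSat (hS : IsParam S) (h : CtxSat S I φ) (G : Y → L) :
    Sat S (dnup S I G) φ :=
  sat_iInf fun xg => sat_iInf fun hxg => by
    obtain ⟨f, hfg⟩ := hxg.1
    exact Sat.upperAdjoint hS hfg (h xg.1)

theorem downOp_subset_of_le_dnup (h : B ≤ dnup S I A) : downOp S I A ⊆ downOp S I B :=
  fun _ hxg => ⟨hxg.1, h.trans (dnup_le_of_mem_downOp hxg)⟩

theorem ctxSat_of_downOp_subset (hS : IsParam S) (h : downOp S I A ⊆ downOp S I B) :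
    CtxSat S I (A, B) := by
  intro x p hp hA
  have hmem : (x, p.2) ∈ downOp S I A := ⟨⟨p.1, hp⟩, (hS.gc hp).le_iff_le.mp hA⟩
  exact (hS.gc hp).le_iff_le.mpr (h hmem).2

end Lemmas

theorem ctxSat_tfae_general
    {L Y X : Type*} [CompleteResiduatedLattice L]
    (S : Set (OpPair L Y)) (hS : IsParam S) (I : X → Y → L) (A B : Y → L) :
    [CtxSat S I (A, B),
     ∀ M : Y → L, Sat S (dnup S I M) (A, B),
     Sat S (dnup S I A) (A, B),
     B ≤ dnup S I A,
     downOp S I A ⊆ downOp S I B].TFAE := by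
  tfae_have 1 → 2 := sat_dnup_of_ctxSat hS
  tfae_have 2 → 3 := fun h => h A
  tfae_have 3 → 4 := fun h => le_of_sat hS h le_dnup
  tfae_have 4 → 5 := downOp_subset_of_le_dnup
  tfae_have 5 → 1 := ctxSat_of_downOp_subset hS
  tfae_finish

/-- characterization of FAIs true in an L-context under S. -/
theorem ctxSat_tfae
    {L Y X : Type*} [CompleteResiduatedLattice L] [Nonempty Y] [Nonempty X]
    (S : Set (OpPair L Y)) (hS : IsParam S) (I : X → Y → L) (A B : Y → L) :
    [CtxSat S I (A, B),
     ∀ M : Y → L, Sat S (dnup S I M) (A, B),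
     Sat S (dnup S I A) (A, B),
     B ≤ dnup S I A,
     downOp S I A ⊆ downOp S I B].TFAE :=
  ctxSat_tfae_general S hS I A B

end FAIparam
end

section
/- Soundness: for every set Σ of FAIs and every FAI A ⇒ B, if Σ ⊢^S A ⇒ B then Σ ⊨^S A ⇒ B. -/
namespace FAIparam

variable {L : Type*} {Y : Type*} {X : Type*}

/-! Every S-model M of Σ satisfies the axioms and is closed under both rules. (Cut) is sound
because each f ∈ S is a lower adjoint and so preserves unions; (F) is sound because S is closed
under composition, so the condition f(A) ⊆ M ⇒ f(B) ⊆ M for all f ∈ S covers every f ∘ f'. -/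

theorem IsParam.galoisConnection [CompleteResiduatedLattice L] {S : Set (OpPair L Y)}
    (hS : IsParam S) {p : OpPair L Y} (hp : p ∈ S) : GaloisConnection p.1 p.2 :=
  hS.1 p hp

section Soundness

variable [CompleteResiduatedLattice L] {S : Set (OpPair L Y)} {M : Y → L}

theorem sat_sup_left (hmono : ∀ p ∈ S, Monotone p.1) (A B : Y → L) :
    Sat S M (A ⊔ B, A) :=
  fun p hp hle => (hmono p hp le_sup_left).trans hle

theorem Sat.cut (hgc : ∀ p ∈ S, GaloisConnection p.1 p.2) {A B C D : Y → L}
    (hAB : Sat S M (A, B)) (hBCD : Sat S M (B ⊔ C, D)) : Sat S M (A ⊔ C, D) := by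
  intro p hp hAC
  rw [(hgc p hp).l_sup, sup_le_iff] at hAC
  have hB : p.1 B ≤ M := hAB p hp hAC.1
  exact hBCD p hp ((hgc p hp).l_sup.trans_le (sup_le hB hAC.2))

theorem Sat.map (hcomp : ∀ p ∈ S, ∀ q ∈ S, ((p.1 ∘ q.1, q.2 ∘ p.2) : OpPair L Y) ∈ S)
    {A B : Y → L} (hAB : Sat S M (A, B)) {q : OpPair L Y} (hq : q ∈ S) :
    Sat S M (q.1 A, q.1 B) :=
  fun p hp => hAB _ (hcomp p hp q hq)

theorem Sat.of_provS (hS : IsParam S) {Th : Set (FAI L Y)} (hM : M ∈ ModS S Th)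
    {φ : FAI L Y} (h : ProvS S Th φ) : Sat S M φ := by
  induction h with
  | ax A B => exact sat_sup_left (fun p hp => (hS.galoisConnection hp).monotone_l) A B
  | hyp hφ => exact hM _ hφ
  | cut _ _ ihAB ihBCD => exact ihAB.cut (fun p hp => hS.galoisConnection hp) ihBCD
  | mul hq _ ih => exact ih.map hS.2.2 hq

end Soundness

theorem provS_sound_general
    {L Y : Type*} [CompleteResiduatedLattice L]
    (S : Set (OpPair L Y)) (hS : IsParam S)
    (Th : Set (FAI L Y)) (A B : Y → L)
    (h : ProvS S Th (A, B)) :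
    Entails S Th (A, B) := by
  rintro M hM φ rfl
  exact Sat.of_provS hS hM h

/-- soundness: Σ ⊢^S A ⇒ B implies Σ ⊨^S A ⇒ B. -/
theorem provS_sound
    {L Y : Type*} [CompleteResiduatedLattice L] [Nonempty Y]
    (S : Set (OpPair L Y)) (hS : IsParam S)
    (Th : Set (FAI L Y)) (A B : Y → L)
    (h : ProvS S Th (A, B)) :
    Entails S Th (A, B) :=
  provS_sound_general S hS Th A B h

end FAIparam
end

section
/- Completeness: if L and Y are finite, then for every set Σ of FAIs and every FAI A ⇒ B, Σ ⊨^S A ⇒ B implies Σ ⊢^S A ⇒ B. -/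
namespace FAIparam

variable {L : Type*} {Y : Type*} {X : Type*}

/-!
The consequents derivable from `A` are closed under finite unions and contain `A`, so for
finite `L^Y` their union `M` is itself derivable from `A`. Rule (F) and the assumptions of `Σ`
make `M` an `S`-model of `Σ`; since `A ⊆ M` and `⟨id, id⟩ ∈ S`, semantic entailment gives
`B ⊆ M`, and `A ⇒ M ⇒ B` is a proof.
-/

section Completeness

variable [CompleteResiduatedLattice L] {S : Set (OpPair L Y)} {Th : Set (FAI L Y)}

namespace ProvS

theorem of_le {A B : Y → L} (hBA : B ≤ A) : ProvS S Th (A, B) := by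
  simpa [sup_eq_right.mpr hBA] using ProvS.ax (S := S) (Th := Th) B A

theorem trans {A B C : Y → L} (hAB : ProvS S Th (A, B)) (hBC : ProvS S Th (B, C)) :
    ProvS S Th (A, C) := by
  simpa using hAB.cut (C := ⊥) (by simpa using hBC)

theorem sup_right {A B : Y → L} (hAB : ProvS S Th (A, B)) (C : Y → L) :
    ProvS S Th (A ⊔ C, B ⊔ C) :=
  hAB.cut (of_le le_rfl)

theorem sup {A B C : Y → L} (hAB : ProvS S Th (A, B)) (hAC : ProvS S Th (A, C)) :
    ProvS S Th (A, B ⊔ C) := by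
  have hA : ProvS S Th (A, A ⊔ B) := by
    simpa [sup_comm] using hAB.sup_right A
  have hAB_C : ProvS S Th (A ⊔ B, B ⊔ C) := by
    simpa [sup_comm] using hAC.sup_right B
  exact hA.trans hAB_C

end ProvS

def provClosure (S : Set (OpPair L Y)) (Th : Set (FAI L Y)) (A : Y → L) : Y → L :=
  sSup {C | ProvS S Th (A, C)}

theorem le_provClosure {A C : Y → L} (h : ProvS S Th (A, C)) : C ≤ provClosure S Th A :=
  le_sSup h

theorem provS_provClosure [Finite (Y → L)] (A : Y → L) : ProvS S Th (A, provClosure S Th A) :=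
  have hsup : SupClosed {C | ProvS S Th (A, C)} := fun _ hB _ hC => hB.sup hC
  hsup.sSup_mem (Set.toFinite _) (ProvS.of_le bot_le) le_rfl

theorem provClosure_mem_modS [Finite (Y → L)] (A : Y → L) :
    provClosure S Th A ∈ ModS S Th := by
  intro φ hφ p hp hle
  exact le_provClosure <|
    ((provS_provClosure A).trans (ProvS.of_le hle)).trans ((ProvS.hyp hφ).mul hp)

end Completeness

theorem provS_complete_general
    {L Y : Type*} [CompleteResiduatedLattice L] [Finite L] [Finite Y]
    (S : Set (OpPair L Y)) (hS : IsParam S)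
    (Th : Set (FAI L Y)) (A B : Y → L)
    (h : Entails S Th (A, B)) :
    ProvS S Th (A, B) := by
  have hA : A ≤ provClosure S Th A := le_provClosure (ProvS.of_le le_rfl)
  have hB : B ≤ provClosure S Th A :=
    h (provClosure_mem_modS A) _ rfl (id, id) hS.2.1 hA
  exact (provS_provClosure A).trans (ProvS.of_le hB)

/-- completeness for finite L and Y: Σ ⊨^S A ⇒ B implies Σ ⊢^S A ⇒ B. -/
theorem provS_complete
    {L Y : Type*} [CompleteResiduatedLattice L] [Finite L] [Finite Y] [Nonempty Y]
    (S : Set (OpPair L Y)) (hS : IsParam S)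
    (Th : Set (FAI L Y)) (A B : Y → L)
    (h : Entails S Th (A, B)) :
    ProvS S Th (A, B) :=
  provS_complete_general S hS Th A B h

end FAIparam
end

section
/- Normalized-proof corollary: Σ ⊢^S A ⇒ B if and only if there exists a subset Σ^S of {f(C) ⇒ f(D) : C ⇒ D ∈ Σ and ⟨f, g⟩ ∈ S} such that A ⇒ B is provable from Σ^S using the axioms and (Cut) as the only inference rule. -/
namespace FAIparam

variable {L : Type*} {Y : Type*} {X : Type*}

section

variable [CompleteResiduatedLattice L]

def images (S : Set (OpPair L Y)) (Th : Set (FAI L Y)) : Set (FAI L Y) :=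
  {ψ | ∃ φ ∈ Th, ∃ p ∈ S, ψ = (p.1 φ.1, p.1 φ.2)}

theorem ProvCut.provS {S : Set (OpPair L Y)} {Th Th' : Set (FAI L Y)}
    (hTh' : ∀ ψ ∈ Th', ProvS S Th ψ) {φ : FAI L Y} (h : ProvCut Th' φ) : ProvS S Th φ := by
  induction h with
  | ax A B => exact ProvS.ax A B
  | hyp hψ => exact hTh' _ hψ
  | cut _ _ ih₁ ih₂ => exact ProvS.cut ih₁ ih₂

theorem provS_of_mem_images {S : Set (OpPair L Y)} {Th : Set (FAI L Y)} {ψ : FAI L Y}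
    (hψ : ψ ∈ images S Th) : ProvS S Th ψ := by
  obtain ⟨φ, hφ, p, hp, rfl⟩ := hψ
  exact ProvS.mul hp (ProvS.hyp hφ)

theorem ProvS.provCut_images {S : Set (OpPair L Y)} {Th : Set (FAI L Y)}
    (hgc : ∀ p ∈ S, GaloisConnection p.1 p.2)
    (hcomp : ∀ p ∈ S, ∀ q ∈ S, ((p.1 ∘ q.1, q.2 ∘ p.2) : OpPair L Y) ∈ S)
    {φ : FAI L Y} (h : ProvS S Th φ) :
    ∀ p ∈ S, ProvCut (images S Th) (p.1 φ.1, p.1 φ.2) := by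
  induction h with
  | ax A B =>
    intro p hp
    rw [(hgc p hp).l_sup]
    exact ProvCut.ax _ _
  | hyp hφ => exact fun p hp => ProvCut.hyp ⟨_, hφ, p, hp, rfl⟩
  | cut _ _ ih₁ ih₂ =>
    intro p hp
    have h₂ := ih₂ p hp
    rw [(hgc p hp).l_sup] at h₂ ⊢
    exact ProvCut.cut (ih₁ p hp) h₂
  | mul hq _ ih => exact fun p hp => ih _ (hcomp p hp _ hq)

end

theorem provS_iff_provCut_of_images_general
    {L Y : Type*} [CompleteResiduatedLattice L]
    (S : Set (OpPair L Y)) (hS : IsParam S)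
    (Th : Set (FAI L Y)) (A B : Y → L) :
    ProvS S Th (A, B) ↔
      ∃ Th' : Set (FAI L Y),
        Th' ⊆ {ψ : FAI L Y | ∃ φ ∈ Th, ∃ p ∈ S, ψ = (p.1 φ.1, p.1 φ.2)} ∧
        ProvCut Th' (A, B) := by
  obtain ⟨hgc, hid, hcomp⟩ := hS
  constructor
  · intro h
    exact ⟨images S Th, subset_rfl, h.provCut_images hgc hcomp _ hid⟩
  · rintro ⟨Th', hTh', h⟩
    exact h.provS fun ψ hψ => provS_of_mem_images (hTh' hψ)

/-- normalized proofs: Σ ⊢^S A ⇒ B iff A ⇒ B is provable, using axioms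
and (Cut) only, from some subset of the (F)-images of formulas of Σ. -/
theorem provS_iff_provCut_of_images
    {L Y : Type*} [CompleteResiduatedLattice L] [Nonempty Y]
    (S : Set (OpPair L Y)) (hS : IsParam S)
    (Th : Set (FAI L Y)) (A B : Y → L) :
    ProvS S Th (A, B) ↔
      ∃ Th' : Set (FAI L Y),
        Th' ⊆ {ψ : FAI L Y | ∃ φ ∈ Th, ∃ p ∈ S, ψ = (p.1 φ.1, p.1 φ.2)} ∧
        ProvCut Th' (A, B) :=
  provS_iff_provCut_of_images_general S hS Th A B

end FAIparam
end

section
/- The supremum defining the degree of truth is attained: for all A, B, M ∈ L^Y, M ⊨^S A ⇒ (||A ⇒ B||^S_M) ⊗ B; that is, ||A ⇒ B||^S_M is the greatest element of the set {c ∈ L : M ⊨^S A ⇒ c ⊗ B}. -/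
namespace FAIparam

variable {L : Type*} {Y : Type*} {X : Type*}

section Attainment

variable {L Y : Type*} [CompleteResiduatedLattice L]

theorem scMul_sSup (s : Set L) (B : Y → L) :
    scMul (sSup s) B = sSup ((scMul · B) '' s) := by
  ext y
  rw [sSup_image]
  simp only [scMul, iSup_apply]
  rw [mul_comm, CompleteResiduatedLattice.mul_sSup]
  simp only [mul_comm (B y)]

-- Each `p.1` is a left adjoint, hence preserves suprema.
theorem sat_sSup {S : Set (OpPair L Y)} (hS : ∀ p ∈ S, GaloisConnection p.1 p.2)
    {M A : Y → L} {𝒞 : Set (Y → L)} (h𝒞 : ∀ C ∈ 𝒞, Sat S M (A, C)) :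
    Sat S M (A, sSup 𝒞) := by
  intro p hp hA
  rw [(hS p hp).l_sSup]
  exact iSup₂_le fun C hC => h𝒞 C hC p hp hA

end Attainment

theorem truthDeg_isGreatest_general
    {L Y : Type*} [CompleteResiduatedLattice L]
    (S : Set (OpPair L Y)) (hS : IsParam S)
    (A B M : Y → L) :
    Sat S M (A, scMul (truthDeg S M A B) B) ∧
    IsGreatest {c : L | Sat S M (A, scMul c B)} (truthDeg S M A B) := by
  have hsat : Sat S M (A, scMul (truthDeg S M A B) B) := by
    rw [truthDeg, scMul_sSup]
    exact sat_sSup hS.1 (by rintro _ ⟨c, hc, rfl⟩; exact hc)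
  exact ⟨hsat, hsat, fun c hc => le_sSup hc⟩

/-- the supremum defining ||A ⇒ B||^S_M is attained: it is the greatest
c with M ⊨^S A ⇒ c ⊗ B. -/
theorem truthDeg_isGreatest
    {L Y : Type*} [CompleteResiduatedLattice L] [Nonempty Y]
    (S : Set (OpPair L Y)) (hS : IsParam S)
    (A B M : Y → L) :
    Sat S M (A, scMul (truthDeg S M A B) B) ∧
    IsGreatest {c : L | Sat S M (A, scMul c B)} (truthDeg S M A B) :=
  truthDeg_isGreatest_general S hS A B M

end FAIparam
end
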